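/- Let a < b be real numbers, n ≥ 1, H : ℝⁿ → ℝ be continuously differentiable with partial derivatives H'_1, …, H'_n, and for i = 1, …, n let f_i : [a,b] × ℝ × ℝ → ℝ be continuous with continuous partial derivatives f_{iy} and f_{iv} with respect to its second and third arguments. Suppose x̃ : [a,b] → ℝ is C¹ with x̃(a) = x_a (the value x(b) is not specified), and x̃ is a weak local extremizer of L[x] = H(F_1[x], …, F_n[x]): there exists δ > 0 such that L[x̃] ≤ L[x] for every C¹ function x : [a,b] → ℝ with x(a) = x_a and ‖x − x̃‖₁ < δ (or L[x̃] ≥ L[x] for all such x). Then the natural boundary condition ∑_{i=1}^{n} H'_i(F_1[x̃], …, F_n[x̃]) · f_{iv}(b, x̃(b), x̃'(b)) = 0 holds. -/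

import Mathlib

/-- The C¹-norm ‖x‖₁ = sup_{t∈[a,b]} |x(t)| + sup_{t∈[a,b]} |x'(t)|. -/
noncomputable def C1Norm (a b : ℝ) (x : ℝ → ℝ) : ℝ :=
  (⨆ t : Set.Icc a b, |x t|) + (⨆ t : Set.Icc a b, |derivWithin x (Set.Icc a b) t|)

/-!
For η ∈ C¹(ℝ) with η(a) = 0, the perturbation x̃ + εη is admissible and C¹-close to x̃ for small ε,
so ε ↦ L[x̃ + εη] has a local extremum at 0. Differentiating under the integrals (the partial
derivatives of the f_i are continuous, hence bounded on compacts) and applying the chain rule to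
H, the first variation ∫_a^b ψ η + φ η' vanishes, where ψ = ∑ H'_i f_{iy} and φ = ∑ H'_i f_{iv}
along x̃. Integrating ψ η by parts against Ψ(t) = ∫_t^b ψ, which vanishes at b, gives
∫_a^b (φ + Ψ) η' = 0 for every such η; the choice η' = φ + Ψ forces φ + Ψ ≡ 0 on [a, b]
(du Bois-Reymond), and at t = b this is the natural boundary condition φ(b) = 0.
-/

open Set Filter Topology MeasureTheory intervalIntegral Function Metric
open scoped Interval

theorem hasDerivAt_comp_add_mul_of_continuous_partials {g gy gv : ℝ → ℝ → ℝ}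
    (hy : ∀ y v, HasDerivAt (g · v) (gy y v) y) (hv : ∀ y v, HasDerivAt (g y ·) (gv y v) v)
    (hcy : Continuous (uncurry gy)) (hcv : Continuous (uncurry gv)) (y v p q ε : ℝ) :
    HasDerivAt (fun e => g (y + e * p) (v + e * q))
      (gy (y + ε * p) (v + ε * q) * p + gv (y + ε * p) (v + ε * q) * q) ε := by
  have hline : HasDerivAt (fun e : ℝ => (y + e * p, v + e * q)) (p, q) ε := by
    refine .prodMk ?_ ?_
    · simpa using ((hasDerivAt_id ε).mul_const p).const_add y
    · simpa using ((hasDerivAt_id ε).mul_const q).const_add v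
  have hspan : Continuous (ContinuousLinearMap.toSpanSingleton ℝ : ℝ → ℝ →L[ℝ] ℝ) :=
    (ContinuousLinearMap.toSpanSingletonCLE (𝕜 := ℝ) (E := ℝ)).continuous
  have hg := hasStrictFDerivAt_uncurry_coprod (u := (y + ε * p, v + ε * q)) (f := g)
    (f₁ := fun y v => .toSpanSingleton ℝ (gy y v)) (f₂ := fun y v => .toSpanSingleton ℝ (gv y v))
    (.of_forall fun z => (hy z.1 z.2).hasFDerivAt) (.of_forall fun z => (hv z.1 z.2).hasFDerivAt)
    (hspan.comp hcy).continuousAt (hspan.comp hcv).continuousAt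
  refine (hg.hasFDerivAt.comp_hasDerivAt ε hline).congr_deriv ?_
  simp [HasUncurry.uncurry, mul_comm]

section FirstVariation

variable {a b : ℝ}

theorem ContinuousOn.comp_of_Icc_prod_univ {X : Type*} [TopologicalSpace X]
    {g : ℝ → ℝ → ℝ → ℝ}
    (hg : ContinuousOn (fun p : ℝ × ℝ × ℝ => g p.1 p.2.1 p.2.2) (Icc a b ×ˢ univ ×ˢ univ))
    {s : Set X} {τ y v : X → ℝ} (hτ : ContinuousOn τ s) (hτs : MapsTo τ s (Icc a b))
    (hy : ContinuousOn y s) (hv : ContinuousOn v s) :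
    ContinuousOn (fun z => g (τ z) (y z) (v z)) s :=
  hg.comp (hτ.prodMk (hy.prodMk hv)) fun _ hz => ⟨hτs hz, trivial, trivial⟩

theorem ContinuousOn.continuous_uncurry_of_Icc_prod_univ {g : ℝ → ℝ → ℝ → ℝ}
    (hg : ContinuousOn (fun p : ℝ × ℝ × ℝ => g p.1 p.2.1 p.2.2) (Icc a b ×ˢ univ ×ˢ univ))
    {t : ℝ} (ht : t ∈ Icc a b) : Continuous (uncurry (g t)) :=
  continuousOn_univ.1 <| hg.comp_of_Icc_prod_univ continuousOn_const (fun _ _ => ht)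
    continuousOn_fst continuousOn_snd

variable {f fy fv : ℝ → ℝ → ℝ → ℝ}
  (hf : ContinuousOn (fun p : ℝ × ℝ × ℝ => f p.1 p.2.1 p.2.2) (Icc a b ×ˢ univ ×ˢ univ))
  (hfy : ∀ t ∈ Icc a b, ∀ y v : ℝ, HasDerivAt (fun y' => f t y' v) (fy t y v) y)
  (hfv : ∀ t ∈ Icc a b, ∀ y v : ℝ, HasDerivAt (fun v' => f t y v') (fv t y v) v)
  (hfy_cont : ContinuousOn (fun p : ℝ × ℝ × ℝ => fy p.1 p.2.1 p.2.2) (Icc a b ×ˢ univ ×ˢ univ))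
  (hfv_cont : ContinuousOn (fun p : ℝ × ℝ × ℝ => fv p.1 p.2.1 p.2.2) (Icc a b ×ˢ univ ×ˢ univ))
include hf hfy hfv hfy_cont hfv_cont

theorem hasDerivAt_integral_add_mul (hab : a ≤ b) {x x' η η' : ℝ → ℝ}
    (hx : ContinuousOn x (Icc a b)) (hx' : ContinuousOn x' (Icc a b))
    (hη : ContinuousOn η (Icc a b)) (hη' : ContinuousOn η' (Icc a b)) :
    HasDerivAt (fun ε => ∫ t in a..b, f t (x t + ε * η t) (x' t + ε * η' t))
      (∫ t in a..b, fy t (x t) (x' t) * η t + fv t (x t) (x' t) * η' t) 0 := by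
  set D : ℝ → ℝ → ℝ := fun ε t => fy t (x t + ε * η t) (x' t + ε * η' t) * η t
    + fv t (x t + ε * η t) (x' t + ε * η' t) * η' t
  have hD : ContinuousOn (uncurry D) (univ ×ˢ Icc a b) := by
    have hsnd : ContinuousOn (Prod.snd : ℝ × ℝ → ℝ) (univ ×ˢ Icc a b) := continuousOn_snd
    have hmaps : MapsTo (Prod.snd : ℝ × ℝ → ℝ) (univ ×ˢ Icc a b) (Icc a b) := fun _ h => h.2
    have hy : ContinuousOn (fun z : ℝ × ℝ => x z.2 + z.1 * η z.2) (univ ×ˢ Icc a b) :=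
      (hx.comp hsnd hmaps).add (continuousOn_fst.mul (hη.comp hsnd hmaps))
    have hv : ContinuousOn (fun z : ℝ × ℝ => x' z.2 + z.1 * η' z.2) (univ ×ˢ Icc a b) :=
      (hx'.comp hsnd hmaps).add (continuousOn_fst.mul (hη'.comp hsnd hmaps))
    exact ((hfy_cont.comp_of_Icc_prod_univ hsnd hmaps hy hv).mul (hη.comp hsnd hmaps)).add
      ((hfv_cont.comp_of_Icc_prod_univ hsnd hmaps hy hv).mul (hη'.comp hsnd hmaps))
  obtain ⟨C, hC⟩ := ((isCompact_closedBall (0 : ℝ) 1).prod isCompact_Icc)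
    |>.exists_bound_of_continuousOn (hD.mono (prod_mono (subset_univ _) subset_rfl))
  have hF : ∀ ε : ℝ, ContinuousOn (fun t => f t (x t + ε * η t) (x' t + ε * η' t)) (Icc a b) :=
    fun ε => hf.comp_of_Icc_prod_univ continuousOn_id (mapsTo_id _)
      (hx.add (continuousOn_const.mul hη)) (hx'.add (continuousOn_const.mul hη'))
  have hD₀ : ContinuousOn (D 0) (Icc a b) :=
    hD.comp (continuousOn_const.prodMk continuousOn_id) fun _ ht => ⟨trivial, ht⟩
  have hmem : ∀ {t}, t ∈ Ι a b → t ∈ Icc a b := fun ht => Ioc_subset_Icc_self (uIoc_of_le hab ▸ ht)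
  have hdiff := (hasDerivAt_integral_of_dominated_loc_of_deriv_le (μ := volume) (bound := fun _ => C)
    (F' := D) (ball_mem_nhds 0 one_pos)
    (.of_forall fun ε => ((hF ε).intervalIntegrable_of_Icc hab).def'.aestronglyMeasurable)
    ((hF 0).intervalIntegrable_of_Icc hab)
    (hD₀.intervalIntegrable_of_Icc hab).def'.aestronglyMeasurable
    (ae_of_all _ fun t ht ε hε => hC (ε, t) ⟨ball_subset_closedBall hε, hmem ht⟩)
    intervalIntegrable_const
    (ae_of_all _ fun t ht ε _ => hasDerivAt_comp_add_mul_of_continuous_partials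
      (hfy t (hmem ht)) (hfv t (hmem ht)) (hfy_cont.continuous_uncurry_of_Icc_prod_univ (hmem ht))
      (hfv_cont.continuous_uncurry_of_Icc_prod_univ (hmem ht)) _ _ _ _ ε)).2
  simpa [D] using hdiff

end FirstVariation

theorem ContinuousLinearMap.apply_eq_sum_smul_apply_single {R M ι : Type*} [Semiring R]
    [TopologicalSpace R] [AddCommMonoid M] [Module R M] [TopologicalSpace M] [Fintype ι]
    [DecidableEq ι] (T : (ι → R) →L[R] M) (w : ι → R) :
    T w = ∑ i, w i • T (Pi.single i 1) := by
  conv_lhs => rw [← Finset.univ_sum_single w]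
  rw [map_sum]
  refine Finset.sum_congr rfl fun i _ => ?_
  rw [← map_smul, ← Pi.single_smul', smul_eq_mul, mul_one]

section CompositeVariation

variable {a b : ℝ} {ι : Type*} [Fintype ι] [DecidableEq ι] {f fy fv : ι → ℝ → ℝ → ℝ → ℝ}
  (hf : ∀ i, ContinuousOn (fun p : ℝ × ℝ × ℝ => f i p.1 p.2.1 p.2.2) (Icc a b ×ˢ univ ×ˢ univ))
  (hfy : ∀ i, ∀ t ∈ Icc a b, ∀ y v : ℝ, HasDerivAt (fun y' => f i t y' v) (fy i t y v) y)
  (hfv : ∀ i, ∀ t ∈ Icc a b, ∀ y v : ℝ, HasDerivAt (fun v' => f i t y v') (fv i t y v) v)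
  (hfy_cont : ∀ i, ContinuousOn (fun p : ℝ × ℝ × ℝ => fy i p.1 p.2.1 p.2.2)
    (Icc a b ×ˢ univ ×ˢ univ))
  (hfv_cont : ∀ i, ContinuousOn (fun p : ℝ × ℝ × ℝ => fv i p.1 p.2.1 p.2.2)
    (Icc a b ×ˢ univ ×ˢ univ))
include hf hfy hfv hfy_cont hfv_cont

theorem hasDerivAt_comp_integral_add_mul (hab : a ≤ b) {H : (ι → ℝ) → ℝ} {x x' η η' : ℝ → ℝ}
    (hH : DifferentiableAt ℝ H fun i => ∫ t in a..b, f i t (x t) (x' t))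
    (hx : ContinuousOn x (Icc a b)) (hx' : ContinuousOn x' (Icc a b))
    (hη : ContinuousOn η (Icc a b)) (hη' : ContinuousOn η' (Icc a b)) :
    HasDerivAt (fun ε => H fun i => ∫ t in a..b, f i t (x t + ε * η t) (x' t + ε * η' t))
      (∫ t in a..b,
        (∑ i, fderiv ℝ H (fun i => ∫ t in a..b, f i t (x t) (x' t)) (Pi.single i 1) *
          fy i t (x t) (x' t)) * η t +
        (∑ i, fderiv ℝ H (fun i => ∫ t in a..b, f i t (x t) (x' t)) (Pi.single i 1) *
          fv i t (x t) (x' t)) * η' t) 0 := by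
  set W : ι → ℝ := fun i => ∫ t in a..b, fy i t (x t) (x' t) * η t + fv i t (x t) (x' t) * η' t
  have hW : HasDerivAt (fun ε i => ∫ t in a..b, f i t (x t + ε * η t) (x' t + ε * η' t)) W 0 :=
    hasDerivAt_pi.2 fun i => hasDerivAt_integral_add_mul (hf i) (hfy i) (hfv i) (hfy_cont i)
      (hfv_cont i) hab hx hx' hη hη'
  refine (hH.hasFDerivAt.comp_hasDerivAt_of_eq 0 hW (by simp)).congr_deriv ?_
  have hint : ∀ i, IntervalIntegrable
      (fun t => fy i t (x t) (x' t) * η t + fv i t (x t) (x' t) * η' t) volume a b := fun i =>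
    ContinuousOn.intervalIntegrable_of_Icc hab <|
      ((hfy_cont i).comp_of_Icc_prod_univ continuousOn_id (mapsTo_id _) hx hx').mul hη |>.add <|
      ((hfv_cont i).comp_of_Icc_prod_univ continuousOn_id (mapsTo_id _) hx hx').mul hη'
  rw [ContinuousLinearMap.apply_eq_sum_smul_apply_single]
  simp only [W, smul_eq_mul, ← intervalIntegral.integral_mul_const]
  rw [← integral_finsetSum fun i _ => (hint i).mul_const _]
  refine integral_congr fun t _ => ?_
  simp only [Finset.sum_mul, ← Finset.sum_add_distrib]
  exact Finset.sum_congr rfl fun i _ => by ring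

end CompositeVariation

section WeakExtremum

variable {a b : ℝ}

theorem C1Norm_const_mul {x : ℝ → ℝ} (hx : DifferentiableOn ℝ x (Icc a b)) (c : ℝ) :
    C1Norm a b (fun t => c * x t) = |c| * C1Norm a b x := by
  have hderiv : ∀ t : Icc a b,
      derivWithin (fun t => c * x t) (Icc a b) t = c * derivWithin x (Icc a b) t :=
    fun t => derivWithin_const_mul c (hx t t.2)
  simp only [C1Norm, hderiv, abs_mul, mul_add, Real.mul_iSup_of_nonneg (abs_nonneg c)]

theorem eventually_of_forall_C1Norm_sub_lt {P : (ℝ → ℝ) → Prop} {xa : ℝ} {xE η : ℝ → ℝ}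
    (hxE : ContDiffOn ℝ 1 xE (Icc a b)) (hxEa : xE a = xa) (hη : ContDiff ℝ 1 η) (hηa : η a = 0)
    (hP : ∃ δ > 0, ∀ x : ℝ → ℝ, ContDiffOn ℝ 1 x (Icc a b) → x a = xa →
      C1Norm a b (fun t => x t - xE t) < δ → P x) :
    ∀ᶠ ε in 𝓝 (0 : ℝ), P (fun t => xE t + ε * η t) := by
  obtain ⟨δ, hδ, hP⟩ := hP
  have hsmall : ∀ᶠ ε in 𝓝 (0 : ℝ), |ε| * C1Norm a b η < δ := by
    have : Continuous fun ε : ℝ => |ε| * C1Norm a b η := by fun_prop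
    exact this.continuousAt.eventually (gt_mem_nhds (by simpa using hδ))
  filter_upwards [hsmall] with ε hε
  refine hP _ (hxE.add (contDiffOn_const.mul hη.contDiffOn)) (by simp [hxEa, hηa]) ?_
  simpa [C1Norm_const_mul (hη.differentiable one_ne_zero).differentiableOn] using hε

theorem integral_comp_derivWithin_add_mul (hab : a < b) (g : ℝ → ℝ → ℝ → ℝ) {x η : ℝ → ℝ}
    (hx : DifferentiableOn ℝ x (Icc a b)) (hη : Differentiable ℝ η) (ε : ℝ) :
    ∫ t in a..b, g t (x t + ε * η t) (derivWithin (fun t => x t + ε * η t) (Icc a b) t) =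
      ∫ t in a..b, g t (x t + ε * η t) (derivWithin x (Icc a b) t + ε * deriv η t) := by
  refine integral_congr fun t ht => ?_
  rw [uIcc_of_le hab.le] at ht
  rw [((hx t ht).hasDerivWithinAt.fun_add ((hη t).hasDerivAt.hasDerivWithinAt.const_mul ε))
    |>.derivWithin (uniqueDiffOn_Icc hab t ht)]

theorem isLocalExtr_comp_add_mul {L : (ℝ → ℝ) → ℝ} {xa : ℝ} {xE η : ℝ → ℝ}
    (hxE : ContDiffOn ℝ 1 xE (Icc a b)) (hxEa : xE a = xa) (hη : ContDiff ℝ 1 η) (hηa : η a = 0)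
    (hext :
      (∃ δ > 0, ∀ x : ℝ → ℝ, ContDiffOn ℝ 1 x (Icc a b) →
        x a = xa → C1Norm a b (fun t => x t - xE t) < δ → L xE ≤ L x) ∨
      (∃ δ > 0, ∀ x : ℝ → ℝ, ContDiffOn ℝ 1 x (Icc a b) →
        x a = xa → C1Norm a b (fun t => x t - xE t) < δ → L x ≤ L xE)) :
    IsLocalExtr (fun ε => L (fun t => xE t + ε * η t)) 0 := by
  rcases hext with hmin | hmax
  · exact .inl (by simpa [IsLocalMin, IsMinFilter] using
      eventually_of_forall_C1Norm_sub_lt hxE hxEa hη hηa hmin)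
  · exact .inr (by simpa [IsLocalMax, IsMaxFilter] using
      eventually_of_forall_C1Norm_sub_lt hxE hxEa hη hηa hmax)

end WeakExtremum

section DuBoisReymond

variable {a b : ℝ}

theorem ContinuousOn.exists_continuous_eqOn_Icc (hab : a ≤ b) {f : ℝ → ℝ}
    (hf : ContinuousOn f (Icc a b)) : ∃ g : ℝ → ℝ, Continuous g ∧ EqOn f g (Icc a b) :=
  ⟨IccExtend hab ((Icc a b).domRestrict f), continuous_IccExtend_iff.2 hf.domRestrict,
    fun _ hx => (IccExtend_of_mem hab ((Icc a b).domRestrict f) hx).symm⟩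

theorem eqOn_zero_of_integral_mul_self_eq_zero (hab : a < b) {g : ℝ → ℝ}
    (hg : ContinuousOn g (Icc a b)) (h : ∫ t in a..b, g t * g t = 0) : EqOn g 0 (Icc a b) := by
  have hae : (fun t => g t * g t) =ᵐ[volume.restrict (Icc a b)] 0 := by
    rw [← Measure.restrict_congr_set Ioc_ae_eq_Icc]
    exact (integral_eq_zero_iff_of_le_of_nonneg_ae hab.le
      (ae_of_all _ fun t => mul_self_nonneg (g t))
      ((hg.mul hg).intervalIntegrable_of_Icc hab.le)).1 h
  exact fun t ht => mul_self_eq_zero.1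
    (Measure.eqOn_Icc_of_ae_eq volume hab.ne hae (hg.mul hg) continuousOn_const ht)

theorem Continuous.integral_mul_eq_integral_deriv_mul_integral {ψ η : ℝ → ℝ}
    (hψ : Continuous ψ) (hη : ContDiff ℝ 1 η) (hηa : η a = 0) :
    ∫ t in a..b, ψ t * η t = ∫ t in a..b, deriv η t * ∫ s in t..b, ψ s := by
  have hibp := integral_mul_deriv_eq_deriv_mul (a := a) (b := b)
    (fun t _ => (hη.differentiable one_ne_zero t).hasDerivAt)
    (fun t _ => integral_hasDerivAt_left (hψ.intervalIntegrable t b)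
      (hψ.stronglyMeasurableAtFilter _ _) hψ.continuousAt)
    ((hη.continuous_deriv le_rfl).intervalIntegrable a b) (hψ.neg.intervalIntegrable a b)
  simp only [integral_same, mul_zero, hηa, zero_mul, sub_zero, zero_sub, mul_neg,
    intervalIntegral.integral_neg, neg_inj] at hibp
  simpa only [mul_comm (η _)] using hibp

theorem Continuous.add_integral_eq_zero_of_forall_integral_mul_add_mul_deriv_eq_zero (hab : a < b)
    {ψ φ : ℝ → ℝ} (hψ : Continuous ψ) (hφ : Continuous φ)
    (h : ∀ η : ℝ → ℝ, ContDiff ℝ 1 η → η a = 0 →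
      ∫ t in a..b, ψ t * η t + φ t * deriv η t = 0) :
    ∀ t ∈ Icc a b, φ t + ∫ s in t..b, ψ s = 0 := by
  set Ψ := fun t => ∫ s in t..b, ψ s
  have hΨ : Continuous Ψ := by
    simpa only [Ψ, integral_symm _ b, Pi.neg_def, neg_neg] using
      (continuous_primitive (μ := volume) (fun _ _ => hψ.intervalIntegrable _ _) b).neg
  set g := fun t => φ t + Ψ t
  have hg : Continuous g := hφ.add hΨ
  have hparts : ∀ η : ℝ → ℝ, ContDiff ℝ 1 η → η a = 0 → ∫ t in a..b, g t * deriv η t = 0 := by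
    intro η hη hηa
    have hi : ∀ {u : ℝ → ℝ}, Continuous u → IntervalIntegrable u volume a b :=
      fun hu => hu.intervalIntegrable a b
    have hηc : Continuous η := hη.continuous
    have hη' : Continuous (deriv η) := hη.continuous_deriv le_rfl
    rw [← h η hη hηa, integral_add (hi (by fun_prop)) (hi (by fun_prop)),
      hψ.integral_mul_eq_integral_deriv_mul_integral hη hηa]
    simp only [g, add_mul]
    rw [integral_add (hi (by fun_prop)) (hi (by fun_prop)), add_comm]
    simp only [Ψ, mul_comm (deriv η _)]
  have hprim : deriv (fun t => ∫ s in a..t, g s) = g := funext (hg.deriv_integral _ a)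
  have hprimC1 : ContDiff ℝ 1 (fun t => ∫ s in a..t, g s) :=
    contDiff_one_iff_deriv.2
      ⟨fun t => (hg.integral_hasStrictDerivAt a t).hasDerivAt.differentiableAt, hprim.symm ▸ hg⟩
  have hsq := hparts _ hprimC1 integral_same
  rw [hprim] at hsq
  exact eqOn_zero_of_integral_mul_self_eq_zero hab hg.continuousOn hsq

theorem ContinuousOn.add_integral_eq_zero_of_forall_integral_mul_add_mul_deriv_eq_zero
    (hab : a < b) {ψ φ : ℝ → ℝ} (hψ : ContinuousOn ψ (Icc a b)) (hφ : ContinuousOn φ (Icc a b))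
    (h : ∀ η : ℝ → ℝ, ContDiff ℝ 1 η → η a = 0 →
      ∫ t in a..b, ψ t * η t + φ t * deriv η t = 0) :
    ∀ t ∈ Icc a b, φ t + ∫ s in t..b, ψ s = 0 := by
  obtain ⟨ψ₀, hψ₀, hψψ₀⟩ := hψ.exists_continuous_eqOn_Icc hab.le
  obtain ⟨φ₀, hφ₀, hφφ₀⟩ := hφ.exists_continuous_eqOn_Icc hab.le
  have h₀ := hψ₀.add_integral_eq_zero_of_forall_integral_mul_add_mul_deriv_eq_zero hab hφ₀
    fun η hη hηa => by
      rw [← h η hη hηa]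
      refine integral_congr fun t ht => ?_
      rw [uIcc_of_le hab.le] at ht
      simp only [hψψ₀ ht, hφφ₀ ht]
  intro t ht
  rw [hφφ₀ ht, integral_congr fun s hs => hψψ₀ (uIcc_subset_Icc ht (right_mem_Icc.2 hab.le) hs)]
  exact h₀ t ht

end DuBoisReymond

theorem composite_natural_boundary_right_general
    (a b : ℝ) (hab : a < b) (n : ℕ)
    (H : (Fin n → ℝ) → ℝ) (hH : ContDiff ℝ 1 H)
    (f fy fv : Fin n → ℝ → ℝ → ℝ → ℝ)
    (hf_cont : ∀ i, ContinuousOn (fun p : ℝ × ℝ × ℝ => f i p.1 p.2.1 p.2.2)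
      (Set.Icc a b ×ˢ (Set.univ : Set ℝ) ×ˢ (Set.univ : Set ℝ)))
    (hfy : ∀ i, ∀ t ∈ Set.Icc a b, ∀ y v : ℝ,
      HasDerivAt (fun y' => f i t y' v) (fy i t y v) y)
    (hfv : ∀ i, ∀ t ∈ Set.Icc a b, ∀ y v : ℝ,
      HasDerivAt (fun v' => f i t y v') (fv i t y v) v)
    (hfy_cont : ∀ i, ContinuousOn (fun p : ℝ × ℝ × ℝ => fy i p.1 p.2.1 p.2.2)
      (Set.Icc a b ×ˢ (Set.univ : Set ℝ) ×ˢ (Set.univ : Set ℝ)))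
    (hfv_cont : ∀ i, ContinuousOn (fun p : ℝ × ℝ × ℝ => fv i p.1 p.2.1 p.2.2)
      (Set.Icc a b ×ˢ (Set.univ : Set ℝ) ×ˢ (Set.univ : Set ℝ)))
    (xa : ℝ) (xE : ℝ → ℝ)
    (hxE : ContDiffOn ℝ 1 xE (Set.Icc a b))
    (hxEa : xE a = xa)
    (F : (ℝ → ℝ) → Fin n → ℝ)
    (hF : ∀ x i, F x i = ∫ t in a..b, f i t (x t) (derivWithin x (Set.Icc a b) t))
    (L : (ℝ → ℝ) → ℝ)
    (hL : ∀ x, L x = H (F x))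
    (hext :
      (∃ δ > 0, ∀ x : ℝ → ℝ, ContDiffOn ℝ 1 x (Set.Icc a b) →
        x a = xa → C1Norm a b (fun t => x t - xE t) < δ → L xE ≤ L x) ∨
      (∃ δ > 0, ∀ x : ℝ → ℝ, ContDiffOn ℝ 1 x (Set.Icc a b) →
        x a = xa → C1Norm a b (fun t => x t - xE t) < δ → L x ≤ L xE)) :
    ∑ i, fderiv ℝ H (F xE) (Pi.single i 1) *
      fv i b (xE b) (derivWithin xE (Set.Icc a b) b) = 0 := by
  set x' := derivWithin xE (Icc a b)
  have hx' : ContinuousOn x' (Icc a b) := hxE.continuousOn_derivWithin (uniqueDiffOn_Icc hab) le_rfl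
  have hFxE : F xE = fun i => ∫ t in a..b, f i t (xE t) (x' t) := funext (hF xE)
  have hcomp : ∀ {g : Fin n → ℝ → ℝ → ℝ → ℝ},
      (∀ i, ContinuousOn (fun p : ℝ × ℝ × ℝ => g i p.1 p.2.1 p.2.2) (Icc a b ×ˢ univ ×ˢ univ)) →
      ∀ i, ContinuousOn (fun t => fderiv ℝ H (F xE) (Pi.single i 1) * g i t (xE t) (x' t))
        (Icc a b) := fun hg i => continuousOn_const.mul <|
    (hg i).comp_of_Icc_prod_univ continuousOn_id (mapsTo_id _) hxE.continuousOn hx'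
  have hboundary := ContinuousOn.add_integral_eq_zero_of_forall_integral_mul_add_mul_deriv_eq_zero
    hab (continuousOn_finsetSum Finset.univ fun i _ => hcomp hfy_cont i)
    (continuousOn_finsetSum Finset.univ fun i _ => hcomp hfv_cont i) ?_ b (right_mem_Icc.2 hab.le)
  · simpa using hboundary
  · intro η hη hηa
    have hvar : (fun ε => L fun t => xE t + ε * η t) =
        fun ε => H fun i => ∫ t in a..b, f i t (xE t + ε * η t) (x' t + ε * deriv η t) := by
      funext ε
      rw [hL]
      congr 1
      funext i
      rw [hF, integral_comp_derivWithin_add_mul hab _ (hxE.differentiableOn one_ne_zero)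
        (hη.differentiable one_ne_zero)]
    have hderiv := hasDerivAt_comp_integral_add_mul hf_cont hfy hfv hfy_cont hfv_cont hab.le
      (hH.differentiable one_ne_zero _) hxE.continuousOn hx' hη.continuous.continuousOn
      (hη.continuous_deriv le_rfl).continuousOn
    rw [← hFxE, ← hvar] at hderiv
    exact (isLocalExtr_comp_add_mul hxE hxEa hη hηa hext).hasDerivAt_eq_zero hderiv

/-- Natural boundary condition at `b` for the composite functional
`L[x] = H(F₁[x], …, F_n[x])` when `x(b)` is free and `x(a) = x_a` is fixed. -/
theorem composite_natural_boundary_right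
    (a b : ℝ) (hab : a < b) (n : ℕ) (hn : 1 ≤ n)
    (H : (Fin n → ℝ) → ℝ) (hH : ContDiff ℝ 1 H)
    (f fy fv : Fin n → ℝ → ℝ → ℝ → ℝ)
    (hf_cont : ∀ i, ContinuousOn (fun p : ℝ × ℝ × ℝ => f i p.1 p.2.1 p.2.2)
      (Set.Icc a b ×ˢ (Set.univ : Set ℝ) ×ˢ (Set.univ : Set ℝ)))
    (hfy : ∀ i, ∀ t ∈ Set.Icc a b, ∀ y v : ℝ,
      HasDerivAt (fun y' => f i t y' v) (fy i t y v) y)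
    (hfv : ∀ i, ∀ t ∈ Set.Icc a b, ∀ y v : ℝ,
      HasDerivAt (fun v' => f i t y v') (fv i t y v) v)
    (hfy_cont : ∀ i, ContinuousOn (fun p : ℝ × ℝ × ℝ => fy i p.1 p.2.1 p.2.2)
      (Set.Icc a b ×ˢ (Set.univ : Set ℝ) ×ˢ (Set.univ : Set ℝ)))
    (hfv_cont : ∀ i, ContinuousOn (fun p : ℝ × ℝ × ℝ => fv i p.1 p.2.1 p.2.2)
      (Set.Icc a b ×ˢ (Set.univ : Set ℝ) ×ˢ (Set.univ : Set ℝ)))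
    (xa : ℝ) (xE : ℝ → ℝ)
    (hxE : ContDiffOn ℝ 1 xE (Set.Icc a b))
    (hxEa : xE a = xa)
    (F : (ℝ → ℝ) → Fin n → ℝ)
    (hF : ∀ x i, F x i = ∫ t in a..b, f i t (x t) (derivWithin x (Set.Icc a b) t))
    (L : (ℝ → ℝ) → ℝ)
    (hL : ∀ x, L x = H (F x))
    (hext :
      (∃ δ > 0, ∀ x : ℝ → ℝ, ContDiffOn ℝ 1 x (Set.Icc a b) →
        x a = xa → C1Norm a b (fun t => x t - xE t) < δ → L xE ≤ L x) ∨
      (∃ δ > 0, ∀ x : ℝ → ℝ, ContDiffOn ℝ 1 x (Set.Icc a b) →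
        x a = xa → C1Norm a b (fun t => x t - xE t) < δ → L x ≤ L xE)) :
    ∑ i, fderiv ℝ H (F xE) (Pi.single i 1) *
      fv i b (xE b) (derivWithin xE (Set.Icc a b) b) = 0 :=
  composite_natural_boundary_right_general a b hab n H hH f fy fv hf_cont hfy hfv hfy_cont hfv_cont
    xa xE hxE hxEa F hF L hL hext
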